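/- Let X be a biquandle with operations x ▷̲ y and x ▷̄ y, let Y be an X-set (a set with a right action of the associated group G_X of X). The abelian groups C_n^{BR}(X)_Y freely generated by (n+1)-tuples (y, x_1, …, x_n) with y ∈ Y and x_i ∈ X, together with the boundary maps ∂_n(y, x_1, …, x_n) = Σ_{i=1}^{n}(−1)^i[(y, x_1, …, x_{i−1}, x_{i+1}, …, x_n) − (y ▷̲ x_i, x_1 ▷̲ x_i, …, x_{i−1} ▷̲ x_i, x_{i+1} ▷̄ x_i, …, x_n ▷̄ x_i)] for n ≥ 2 and ∂_n = 0 for n ≤ 1, form a chain complex: ∂_{n−1} ∘ ∂_n = 0. -/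

import Mathlib

/-- A biquandle: a set with two binary operations `ul` (x ▷̲ y) and `ol` (x ▷̄ y)
satisfying the biquandle axioms (B1)-(B4). -/
structure Biquandle (X : Type*) where
  ul : X → X → X
  ol : X → X → X
  b1 : ∀ x, ul x x = ol x x
  b2u : ∀ y, Function.Bijective fun x => ul x y
  b2o : ∀ y, Function.Bijective fun x => ol x y
  b3 : Function.Bijective (fun p : X × X => (ol p.2 p.1, ul p.1 p.2))
  b4a : ∀ x y z, ul (ul x y) (ul z y) = ul (ul x z) (ol y z)
  b4b : ∀ x y z, ol (ul x y) (ul z y) = ul (ol x z) (ol y z)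
  b4c : ∀ x y z, ol (ol x y) (ol z y) = ol (ol x z) (ul y z)

/-- The birack boundary map ∂ : C_{n+1}^{BR}(X) → C_n^{BR}(X) on the free abelian
groups on tuples, given by
∂(x_1,…,x_m) = Σ_i (-1)^i [(x_1,…,x̂_i,…,x_m) - (x_1 ▷̲ x_i,…,x_{i-1} ▷̲ x_i, x_{i+1} ▷̄ x_i,…,x_m ▷̄ x_i)],
and ∂ = 0 in degrees ≤ 1. -/
noncomputable def bqBoundary {X : Type*} (B : Biquandle X) (n : ℕ) :
    FreeAbelianGroup (Fin (n + 1) → X) →+ FreeAbelianGroup (Fin n → X) :=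
  if n = 0 then 0 else
  FreeAbelianGroup.lift fun x : Fin (n + 1) → X =>
    ∑ i : Fin (n + 1), ((-1 : ℤ) ^ ((i : ℕ) + 1)) •
      (FreeAbelianGroup.of (x ∘ i.succAbove) -
       FreeAbelianGroup.of (fun j : Fin n =>
         if ((i.succAbove j : Fin (n + 1)) : ℕ) < (i : ℕ)
           then B.ul (x (i.succAbove j)) (x i)
           else B.ol (x (i.succAbove j)) (x i)))

/-- The subgroup C_n^{BD}(X) of degenerate chains, generated by tuples with two
equal consecutive entries. -/
def degen (X : Type*) (n : ℕ) : AddSubgroup (FreeAbelianGroup (Fin n → X)) :=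
  AddSubgroup.closure {c | ∃ x : Fin n → X,
    (∃ i j : Fin n, (i : ℕ) + 1 = (j : ℕ) ∧ x i = x j) ∧ c = FreeAbelianGroup.of x}

/-- The relations a · (b ▷̄ a) = b · (a ▷̲ b) defining the associated group of a
biquandle. -/
def bqRels {X : Type*} (B : Biquandle X) : Set (FreeGroup X) :=
  {r | ∃ a b : X, r = FreeGroup.of a * FreeGroup.of (B.ol b a) *
      (FreeGroup.of b * FreeGroup.of (B.ul a b))⁻¹}

/-- The associated group G_X = ⟨a ∈ X | a·(b ▷̄ a) = b·(a ▷̲ b)⟩ of a biquandle. -/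
abbrev AssocGroup {X : Type*} (B : Biquandle X) : Type _ := PresentedGroup (bqRels B)

/-- The shadow action y ▷̲ x of a biquandle element `x` on an element `y` of an
X-set `Y` (a set with a right action of the associated group), given by the right
action of the generator corresponding to `x`. -/
noncomputable def sact {X : Type*} (B : Biquandle X) {Y : Type*}
    [MulAction (AssocGroup B)ᵐᵒᵖ Y] (y : Y) (x : X) : Y :=
  MulOpposite.op (PresentedGroup.of x : AssocGroup B) • y

/-- The shadow birack boundary map ∂ : C_{n+1}^{BR}(X)_Y → C_n^{BR}(X)_Y. -/
noncomputable def sBoundary {X : Type*} (B : Biquandle X) (Y : Type*)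
    [MulAction (AssocGroup B)ᵐᵒᵖ Y] (n : ℕ) :
    FreeAbelianGroup (Y × (Fin (n + 1) → X)) →+ FreeAbelianGroup (Y × (Fin n → X)) :=
  if n = 0 then 0 else
  FreeAbelianGroup.lift fun yx : Y × (Fin (n + 1) → X) =>
    ∑ i : Fin (n + 1), ((-1 : ℤ) ^ ((i : ℕ) + 1)) •
      (FreeAbelianGroup.of (yx.1, yx.2 ∘ i.succAbove) -
       FreeAbelianGroup.of (sact B yx.1 (yx.2 i), fun j : Fin n =>
         if ((i.succAbove j : Fin (n + 1)) : ℕ) < (i : ℕ)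
           then B.ul (yx.2 (i.succAbove j)) (yx.2 i)
           else B.ol (yx.2 (i.succAbove j)) (yx.2 i)))

/-- The subgroup C_n^{BD}(X)_Y of degenerate shadow chains, generated by tuples
(y, x_1, …, x_n) with x_i = x_{i+1} for some i. -/
def sDegen (X Y : Type*) (n : ℕ) : AddSubgroup (FreeAbelianGroup (Y × (Fin n → X))) :=
  AddSubgroup.closure {c | ∃ (y : Y) (x : Fin n → X),
    (∃ i j : Fin n, (i : ℕ) + 1 = (j : ℕ) ∧ x i = x j) ∧ c = FreeAbelianGroup.of (y, x)}

/-!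
Write `∂ = ∑ᵢ (-1)^(i+1) (d⁰ᵢ - d¹ᵢ)`, where `d⁰ᵢ` deletes `xᵢ` and `d¹ᵢ` deletes it after
letting it act on the remaining entries and on `y`. For `i ≤ j` and `ε, δ ∈ {0, 1}` the
identities `d^ε_i ∘ d^δ_(j+1) = d^δ_j ∘ d^ε_i` hold: on an entry `x_k` of the tuple the
two-twist case is (B4a), (B4b) or (B4c) according as `k < i`, `i < k < j + 1` or `j + 1 < k`,
and on `y` it is the defining relation `a · (b ▷̄ a) = b · (a ▷̲ b)` of `G_X`. Hence the
differences `d⁰ᵢ - d¹ᵢ` satisfy the semi-simplicial identities, and their alternating sum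
squares to zero.
-/

theorem AddMonoidHom.alternating_sum_comp_alternating_sum_eq_zero {C D E : Type*}
    [AddCommGroup C] [AddCommGroup D] [AddCommGroup E] {n : ℕ}
    (d : Fin (n + 2) → D →+ E) (d' : Fin (n + 3) → C →+ D)
    (h : ∀ i j : Fin (n + 2), i ≤ j → (d i).comp (d' j.succ) = (d j).comp (d' i.castSucc)) :
    (∑ i : Fin (n + 2), (-1 : ℤ) ^ (i : ℕ) • d i).comp
      (∑ j : Fin (n + 3), (-1 : ℤ) ^ (j : ℕ) • d' j) = 0 := by
  ext c
  simp only [AddMonoidHom.comp_apply, AddMonoidHom.finsetSum_apply, AddMonoidHom.smul_apply,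
    map_sum, map_zsmul, Finset.smul_sum, smul_smul, AddMonoidHom.zero_apply]
  rw [Fin.sum_sum_eq_sum_triangle_add]
  refine Finset.sum_eq_zero fun i _ => Finset.sum_eq_zero fun j hj => ?_
  rw [← AddMonoidHom.comp_apply (d i), h i j (Finset.mem_Ici.1 hj), AddMonoidHom.comp_apply,
    ← add_smul, Fin.val_succ, Fin.val_castSucc]
  convert zero_smul ℤ _
  ring

namespace Fin

variable {α : Type*} {n : ℕ}

theorem removeNth_removeNth_succ_of_le (x : Fin (n + 2) → α) {i j : Fin (n + 1)} (hij : i ≤ j) :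
    i.removeNth (j.succ.removeNth x) = j.removeNth (i.castSucc.removeNth x) := by
  have hlt : i.castSucc < j.succ := castSucc_lt_succ_iff.2 hij
  rw [removeNth_removeNth_eq_swap, succAbove_of_castSucc_lt _ _ hlt,
    predAbove_of_castSucc_lt _ _ hlt, pred_succ]

theorem removeNth_removeNth_congr {f g : Fin (n + 2) → α} (i : Fin (n + 2)) (j : Fin (n + 1))
    (h : ∀ k, k ≠ i → k ≠ i.succAbove j → f k = g k) :
    j.removeNth (i.removeNth f) = j.removeNth (i.removeNth g) :=
  funext fun _ => h _ (succAbove_ne _ _) ((succAbove_right_injective).ne (succAbove_ne _ _))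

end Fin

namespace Biquandle

variable {X : Type*} (B : Biquandle X)

/-- The entry at `i` itself is irrelevant: `twistFace` removes it. -/
def twist {n : ℕ} (x : Fin n → X) (i : Fin n) : Fin n → X :=
  fun k => if k < i then B.ul (x k) (x i) else B.ol (x k) (x i)

theorem twist_removeNth {n : ℕ} (x : Fin (n + 1) → X) (i : Fin (n + 1)) (j : Fin n) :
    B.twist (i.removeNth x) j = i.removeNth (B.twist x (i.succAbove j)) := by
  funext k
  simp only [twist, Fin.removeNth_apply, Fin.succAbove_lt_succAbove_iff]

theorem twist_twist_of_lt {n : ℕ} (x : Fin n → X) {i j k : Fin n} (hij : i < j) (hki : k ≠ i)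
    (hkj : k ≠ j) : B.twist (B.twist x j) i k = B.twist (B.twist x i) j k := by
  have hji : ¬ j < i := not_lt.2 hij.le
  simp only [twist, if_pos hij, if_neg hji]
  rcases lt_or_gt_of_ne hki with hk | hk
  · simp only [if_pos hk, if_pos (hk.trans hij)]
    exact B.b4a _ _ _
  rcases lt_or_gt_of_ne hkj with hk' | hk'
  · simp only [if_neg (not_lt.2 hk.le), if_pos hk']
    exact B.b4b _ _ _
  · simp only [if_neg (not_lt.2 hk.le), if_neg (not_lt.2 hk'.le)]
    exact (B.b4c _ _ _).symm

theorem of_mul_of_ol (a b : X) :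
    (PresentedGroup.of a : AssocGroup B) * PresentedGroup.of (B.ol b a) =
      PresentedGroup.of b * PresentedGroup.of (B.ul a b) :=
  PresentedGroup.mk_eq_mk_of_mul_inv_mem ⟨a, b, rfl⟩

variable {Y : Type*} [MulAction (AssocGroup B)ᵐᵒᵖ Y]

theorem sact_sact_ol (y : Y) (a b : X) :
    sact B (sact B y a) (B.ol b a) = sact B (sact B y b) (B.ul a b) := by
  simp only [sact, smul_smul, ← MulOpposite.op_mul, of_mul_of_ol]

end Biquandle

section Faces

variable {X : Type*} (B : Biquandle X) {Y : Type*} [MulAction (AssocGroup B)ᵐᵒᵖ Y] {n : ℕ}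

def deleteFace (i : Fin (n + 1)) (p : Y × (Fin (n + 1) → X)) : Y × (Fin n → X) :=
  (p.1, i.removeNth p.2)

noncomputable def twistFace (i : Fin (n + 1)) (p : Y × (Fin (n + 1) → X)) : Y × (Fin n → X) :=
  (sact B p.1 (p.2 i), i.removeNth (B.twist p.2 i))

variable {i j : Fin (n + 1)} (hij : i ≤ j) (p : Y × (Fin (n + 2) → X))
include hij

theorem deleteFace_deleteFace :
    deleteFace i (deleteFace j.succ p) = deleteFace j (deleteFace i.castSucc p) := by
  simp only [deleteFace, Fin.removeNth_removeNth_succ_of_le _ hij]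

theorem deleteFace_twistFace :
    deleteFace i (twistFace B j.succ p) = twistFace B j (deleteFace i.castSucc p) := by
  simp only [deleteFace, twistFace, Fin.removeNth_apply, B.twist_removeNth,
    Fin.succAbove_castSucc_of_le _ _ hij, Fin.removeNth_removeNth_succ_of_le _ hij]

theorem twistFace_deleteFace :
    twistFace B i (deleteFace j.succ p) = deleteFace j (twistFace B i.castSucc p) := by
  simp only [deleteFace, twistFace, Fin.removeNth_apply, B.twist_removeNth,
    Fin.succAbove_succ_of_le _ _ hij, Fin.removeNth_removeNth_succ_of_le _ hij]

theorem twistFace_twistFace :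
    twistFace B i (twistFace B j.succ p) = twistFace B j (twistFace B i.castSucc p) := by
  have hlt : i.castSucc < j.succ := Fin.castSucc_lt_succ_iff.2 hij
  have hj : i.castSucc.succAbove j = j.succ := Fin.succAbove_castSucc_of_le _ _ hij
  have hpiv_i : B.twist p.2 j.succ i.castSucc = B.ul (p.2 i.castSucc) (p.2 j.succ) := if_pos hlt
  have hpiv_j : B.twist p.2 i.castSucc j.succ = B.ol (p.2 j.succ) (p.2 i.castSucc) :=
    if_neg (not_lt.2 hlt.le)
  simp only [twistFace, Fin.removeNth_apply, B.twist_removeNth, Fin.succAbove_succ_of_le _ _ hij,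
    hj, hpiv_i, hpiv_j, Fin.removeNth_removeNth_succ_of_le _ hij, B.sact_sact_ol]
  congr 1
  refine Fin.removeNth_removeNth_congr _ _ fun k hki hkj => ?_
  rw [hj] at hkj
  exact B.twist_twist_of_lt p.2 hlt hki hkj

end Faces

section Boundary

variable {X : Type*} (B : Biquandle X) (Y : Type*) [MulAction (AssocGroup B)ᵐᵒᵖ Y] {n : ℕ}

noncomputable def sFace (i : Fin (n + 1)) :
    FreeAbelianGroup (Y × (Fin (n + 1) → X)) →+ FreeAbelianGroup (Y × (Fin n → X)) :=
  FreeAbelianGroup.map (deleteFace i) - FreeAbelianGroup.map (twistFace B i)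

theorem sFace_comp_sFace_succ {i j : Fin (n + 1)} (hij : i ≤ j) :
    (sFace B Y i).comp (sFace B Y j.succ) = (sFace B Y j).comp (sFace B Y i.castSucc) := by
  ext p
  simp only [sFace, AddMonoidHom.comp_apply, AddMonoidHom.sub_apply, map_sub,
    FreeAbelianGroup.map_of_apply, deleteFace_deleteFace hij, deleteFace_twistFace B hij,
    twistFace_deleteFace B hij, twistFace_twistFace B hij]
  abel

theorem sBoundary_succ :
    sBoundary B Y (n + 1) = ∑ i : Fin (n + 2), (-1 : ℤ) ^ ((i : ℕ) + 1) • sFace B Y i := by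
  ext p
  simp only [sBoundary, if_neg n.succ_ne_zero, FreeAbelianGroup.lift_apply_of,
    AddMonoidHom.finsetSum_apply, AddMonoidHom.smul_apply, sFace, AddMonoidHom.sub_apply,
    FreeAbelianGroup.map_of_apply]
  rfl

end Boundary

theorem sBoundary_comp_sBoundary_general {X : Type*} (B : Biquandle X) (Y : Type*)
    [MulAction (AssocGroup B)ᵐᵒᵖ Y] :
    ∀ n : ℕ, (sBoundary B Y n).comp (sBoundary B Y (n + 1)) = 0 := by
  rintro (_ | n)
  · simp [sBoundary]
  · simp only [sBoundary_succ, pow_succ, mul_neg_one, neg_smul, Finset.sum_neg_distrib,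
      AddMonoidHom.neg_comp, AddMonoidHom.comp_neg, neg_neg]
    exact AddMonoidHom.alternating_sum_comp_alternating_sum_eq_zero _ _
      fun i j hij => sFace_comp_sFace_succ B Y hij

/-- The shadow birack chain groups with the stated boundary maps form a chain
complex: ∂ ∘ ∂ = 0. -/
theorem sBoundary_comp_sBoundary {X : Type*} (B : Biquandle X) (Y : Type*)
    [Nonempty Y] [MulAction (AssocGroup B)ᵐᵒᵖ Y] :
    ∀ n : ℕ, (sBoundary B Y n).comp (sBoundary B Y (n + 1)) = 0 :=
  sBoundary_comp_sBoundary_general B Y
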